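/- Let T : 𝕏 × 𝕏 × 𝕐 → 𝕐 be jointly Borel-measurable and let ((X_i, Y_i))_{i≥1} be an i.i.d. sequence with law μ on a probability space (Ω, ℙ). Define the V-statistic ℓ_n^V(T) := −(2/n²) Σ_{i=1}^n Σ_{j=1}^n k(Y_i, T(X_i, X_j, Y_j)) + (1/n³) Σ_{i=1}^n Σ_{j=1}^n Σ_{l=1}^n k(T(X_i, X_j, Y_j), T(X_i, X_l, Y_l)). Then, with c := −∫ ‖ψ(y)‖²_H dμ(x,y), for every ε > 0 there exists M > 0 such that for all n ≥ 1, ℙ( |ℓ_n^V(T) − ℓ(T) − c| > M·n^{−1/2} ) ≤ ε. -/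

import Mathlib

/-!
The two sums in `vStat` are V-statistics of orders 2 and 3 of the sample, with bounded kernels
`-2 k(Y₁, T(X₁, X₂, Y₂))` and `k(T(X₁, X₂, Y₂), T(X₁, X₃, Y₃))`. By Fubini their means are
`-2 E⟪ψ(Y), g_T(X)⟫` and `E‖g_T(X)‖²`, whose sum is `ℓ(T) + c` once the square in `ℓ(T)` is
expanded.

For a V-statistic of order `m` whose kernel is bounded by `B`, the centred terms of two index
tuples are uncorrelated as soon as the `2m` indices are pairwise distinct, by independence. All
other pairs of tuples number at most `4m²n^(2m-1)`, so the centred sum has second moment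
`O(n^(2m-1))`. Chebyshev's inequality then bounds the probability of a deviation larger than
`M/√n` by `16m²B²/M²`, uniformly in `n`.
-/

open MeasureTheory ProbabilityTheory RealInnerProductSpace

noncomputable section

variable {𝕏 𝕐 : Type*} [MeasurableSpace 𝕏] [MeasurableSpace 𝕐]
variable {H : Type*} [NormedAddCommGroup H] [InnerProductSpace ℝ H]

/-- `g_T(x) := ∫ ψ(T(x, x', y')) dμ(x', y')` where `μ = ν ⊗ κ`. -/
def gEmb (ν : Measure 𝕏) (κ : Kernel 𝕏 𝕐) (ψ : 𝕐 → H)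
    (T : 𝕏 → 𝕏 → 𝕐 → 𝕐) (x : 𝕏) : H :=
  ∫ q, ψ (T x q.1 q.2) ∂(ν.compProd κ)

/-- Population CMMD loss `ℓ(T) := ∫ ‖ψ(y) − g_T(x)‖² dμ(x,y)` where `μ = ν ⊗ κ`. -/
def cmmdLoss (ν : Measure 𝕏) (κ : Kernel 𝕏 𝕐) (ψ : 𝕐 → H)
    (T : 𝕏 → 𝕏 → 𝕐 → 𝕐) : ℝ :=
  ∫ q, ‖ψ q.2 - gEmb ν κ ψ T q.1‖ ^ 2 ∂(ν.compProd κ)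

/-- The CMMD V-statistic on the first `n` data points `z 0, …, z (n−1)`,
with `k(y, y') := ⟪ψ y, ψ y'⟫`:
`ℓ_n^V(T) = −(2/n²) Σᵢⱼ k(Yᵢ, T(Xᵢ,Xⱼ,Yⱼ)) + (1/n³) Σᵢⱼₗ k(T(Xᵢ,Xⱼ,Yⱼ), T(Xᵢ,Xₗ,Yₗ))`. -/
def vStat (ψ : 𝕐 → H) (T : 𝕏 → 𝕏 → 𝕐 → 𝕐) (n : ℕ) (z : ℕ → 𝕏 × 𝕐) : ℝ :=
  -(2 / (n : ℝ) ^ 2) *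
      ∑ i ∈ Finset.range n, ∑ j ∈ Finset.range n,
        ⟪ψ (z i).2, ψ (T (z i).1 (z j).1 (z j).2)⟫
  + (1 / (n : ℝ) ^ 3) *
      ∑ i ∈ Finset.range n, ∑ j ∈ Finset.range n, ∑ l ∈ Finset.range n,
        ⟪ψ (T (z i).1 (z j).1 (z j).2), ψ (T (z i).1 (z l).1 (z l).2)⟫

end

open Finset

section Counting

variable {ι α : Type*} [Fintype ι] [Fintype α] [DecidableEq ι] [DecidableEq α]

theorem card_filter_apply_eq_apply_mul_le {a b : ι} (hab : a ≠ b) :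
    #{w : ι → α | w a = w b} * Fintype.card α ≤ Fintype.card α ^ Fintype.card ι := by
  -- `(w, x) ↦ update w b x` is injective on collisions: the lost value `w b` equals `w a`.
  rw [← Fintype.card_fun, ← card_univ (α := ι → α), ← card_univ (α := α), ← card_product]
  refine card_le_card_of_injOn (fun p => Function.update p.1 b p.2) (fun _ _ => mem_univ _) ?_
  rintro ⟨w, x⟩ hw ⟨w', x'⟩ hw' h
  simp only [coe_product, coe_filter, mem_univ, true_and, Set.mem_prod, Set.mem_ofPred_eq] at hw hw'
  have hx : x = x' := by simpa using congrFun h b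
  refine Prod.ext (funext fun c => ?_) hx
  by_cases hc : c = b
  · subst hc
    simpa [← hw.1, ← hw'.1, Function.update_of_ne hab] using congrFun h a
  · simpa [Function.update_of_ne hc] using congrFun h c

theorem card_filter_not_injective_mul_le :
    #{w : ι → α | ¬ Function.Injective w} * Fintype.card α
      ≤ Fintype.card ι ^ 2 * Fintype.card α ^ Fintype.card ι := by
  have hsub : ({w | ¬ Function.Injective w} : Finset (ι → α))
      ⊆ (univ : Finset ι).offDiag.biUnion fun q => {w | w q.1 = w q.2} := by
    intro w hw
    obtain ⟨a, b, hab, hne⟩ := Function.not_injective_iff.1 (mem_filter.1 hw).2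
    exact mem_biUnion.2 ⟨(a, b), by simpa using hne, by simpa using hab⟩
  calc #{w : ι → α | ¬ Function.Injective w} * Fintype.card α
      ≤ ∑ q ∈ (univ : Finset ι).offDiag, #{w : ι → α | w q.1 = w q.2} * Fintype.card α := by
        rw [← sum_mul]; gcongr; exact (card_le_card hsub).trans card_biUnion_le
    _ ≤ ∑ _q ∈ (univ : Finset ι).offDiag, Fintype.card α ^ Fintype.card ι :=
        sum_le_sum fun q hq => card_filter_apply_eq_apply_mul_le (mem_offDiag.1 hq).2.2
    _ ≤ Fintype.card ι ^ 2 * Fintype.card α ^ Fintype.card ι := by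
        rw [sum_const, smul_eq_mul, sq, ← Fintype.card_prod]
        gcongr
        exact card_le_univ _

end Counting

theorem Fintype.sum_pi_fin_succ {α M : Type*} [Fintype α] [AddCommMonoid M] {k : ℕ}
    (G : (Fin (k + 1) → α) → M) :
    ∑ t, G t = ∑ a, ∑ t : Fin k → α, G (Fin.cons a t) := by
  rw [← Fintype.sum_prod_type']
  exact (Fintype.sum_equiv (Fin.consEquiv fun _ => α) _ _ fun _ => rfl).symm

theorem Fintype.sum_pi_fin_one {α M : Type*} [Fintype α] [AddCommMonoid M]
    (G : (Fin 1 → α) → M) : ∑ t, G t = ∑ a, G ![a] :=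
  Fintype.sum_equiv (Equiv.funUnique (Fin 1) α) _ _ fun t => congrArg G (funext fun i => by
    fin_cases i; rfl)

theorem Fintype.sq_sum_pi_eq_sum_pi_sum {ι α R : Type*} [Fintype α] [Fintype ι] [DecidableEq ι]
    [CommSemiring R] (f : (ι → α) → R) :
    (∑ t, f t) ^ 2 = ∑ w : ι ⊕ ι → α, f (w ∘ Sum.inl) * f (w ∘ Sum.inr) := by
  rw [sq, Fintype.sum_mul_sum, ← Fintype.sum_prod_type']
  exact (Fintype.sum_equiv (Equiv.sumArrowEquivProdArrow ι ι α) _ _ fun _ => rfl).symm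

theorem exists_pos_div_sq_le (K : ℝ) {ε : ℝ} (hε : 0 < ε) : ∃ M > 0, K / M ^ 2 ≤ ε := by
  have hlim : Filter.Tendsto (fun M : ℝ => K / M ^ 2) Filter.atTop (nhds 0) :=
    tendsto_const_nhds.div_atTop (Filter.tendsto_pow_atTop two_ne_zero)
  obtain ⟨M, hMε, hM⟩ :=
    ((hlim.eventually (ge_mem_nhds hε)).and (Filter.eventually_gt_atTop 0)).exists
  exact ⟨M, hM, hMε⟩

theorem abs_real_inner_le_sq {E : Type*} [NormedAddCommGroup E] [InnerProductSpace ℝ E]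
    {x y : E} {C : ℝ} (hx : ‖x‖ ≤ C) (hy : ‖y‖ ≤ C) : |⟪x, y⟫| ≤ C ^ 2 :=
  (abs_real_inner_le_norm x y).trans (by nlinarith [norm_nonneg x, norm_nonneg y])

theorem measure_lt_abs_le_integral_sq_div {Ω : Type*} [MeasurableSpace Ω] {P : Measure Ω}
    [IsFiniteMeasure P] {W : Ω → ℝ} (hW : Integrable (fun ω => W ω ^ 2) P) {a : ℝ} (ha : 0 < a) :
    P {ω | a < |W ω|} ≤ ENNReal.ofReal ((∫ ω, W ω ^ 2 ∂P) / a ^ 2) := by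
  have hmarkov :=
    mul_meas_ge_le_integral_of_nonneg (ae_of_all _ fun ω => sq_nonneg (W ω)) hW (a ^ 2)
  calc P {ω | a < |W ω|} ≤ P {ω | a ^ 2 ≤ W ω ^ 2} :=
        measure_mono fun ω (hω : a < |W ω|) => show a ^ 2 ≤ W ω ^ 2 by
          simpa only [sq_abs] using pow_le_pow_left₀ ha.le hω.le 2
    _ = ENNReal.ofReal (P.real {ω | a ^ 2 ≤ W ω ^ 2}) := (ofReal_measureReal).symm
    _ ≤ _ := ENNReal.ofReal_le_ofReal ((le_div_iff₀' (by positivity)).2 hmarkov)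

theorem measurable_fin_cons_right {E : Type*} [MeasurableSpace E] {k : ℕ} (a : E) :
    Measurable fun v : Fin k → E => (Fin.cons a v : Fin (k + 1) → E) :=
  measurable_pi_iff.2 fun i => by cases i using Fin.cases <;> simp [measurable_pi_apply]

section PiFin

variable {E G : Type*} [MeasurableSpace E] [NormedAddCommGroup G] [NormedSpace ℝ G]
  {μ : Measure E}

theorem integral_pi_fin_one {F : (Fin 1 → E) → G} :
    ∫ v, F v ∂(Measure.pi fun _ => μ) = ∫ a, F ![a] ∂μ := by
  convert ((measurePreserving_funUnique μ (Fin 1)).symm.integral_comp' F).symm using 3 with a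
  congr 1
  ext i
  fin_cases i
  rfl

variable [SigmaFinite μ]

theorem integral_pi_fin_succ {k : ℕ} {F : (Fin (k + 1) → E) → G}
    (hF : Integrable F (Measure.pi fun _ => μ)) :
    ∫ v, F v ∂(Measure.pi fun _ => μ)
      = ∫ a, ∫ v, F (Fin.cons a v) ∂(Measure.pi fun _ => μ) ∂μ := by
  have e := (measurePreserving_piFinSuccAbove (fun _ : Fin (k + 1) => μ) 0).symm
  have hint : Integrable (fun p => F ((MeasurableEquiv.piFinSuccAbove (fun _ => E) 0).symm p))
      (μ.prod (Measure.pi fun _ => μ)) :=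
    (e.integrable_comp_emb (MeasurableEquiv.measurableEmbedding _)).2 hF
  rw [← e.integral_comp', integral_prod _ hint]
  simp [MeasurableEquiv.piFinSuccAbove_symm_apply, Fin.insertNthEquiv, Fin.insertNth_zero']

theorem integral_pi_fin_two {F : (Fin 2 → E) → G} (hF : Integrable F (Measure.pi fun _ => μ)) :
    ∫ v, F v ∂(Measure.pi fun _ => μ) = ∫ a, ∫ b, F ![a, b] ∂μ ∂μ := by
  simp only [integral_pi_fin_succ hF, integral_pi_fin_one]
  rfl

theorem integral_pi_fin_three [IsFiniteMeasure μ] {F : (Fin 3 → E) → G}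
    (hF : StronglyMeasurable F) {B : ℝ} (hB : ∀ v, ‖F v‖ ≤ B) :
    ∫ v, F v ∂(Measure.pi fun _ => μ) = ∫ a, ∫ b, ∫ c, F ![a, b, c] ∂μ ∂μ ∂μ := by
  rw [integral_pi_fin_succ (.of_bound hF.aestronglyMeasurable B (ae_of_all _ hB))]
  congr 1 with a
  exact integral_pi_fin_two (.of_bound
    (hF.comp_measurable (measurable_fin_cons_right a)).aestronglyMeasurable B
    (ae_of_all _ fun _ => hB _))

end PiFin

section VStatistic

variable {E : Type*} [MeasurableSpace E]

noncomputable def vStatistic {m : ℕ} (F : (Fin m → E) → ℝ) (n : ℕ) (z : ℕ → E) : ℝ :=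
  ((n : ℝ) ^ m)⁻¹ * ∑ t : Fin m → Fin n, F fun r => z (t r)

theorem abs_sub_integral_le {μ : Measure E} [IsProbabilityMeasure μ] {F : E → ℝ} {B : ℝ}
    (hB : ∀ x, |F x| ≤ B) (x : E) : |F x - ∫ y, F y ∂μ| ≤ 2 * B := by
  have hint : |∫ y, F y ∂μ| ≤ B := by
    simpa using norm_integral_le_of_norm_le_const (μ := μ) (f := F) (ae_of_all _ hB)
  linarith [abs_sub (F x) (∫ y, F y ∂μ), hB x]

theorem abs_mul_sub_integral_le {μ : Measure E} [IsProbabilityMeasure μ] {F : E → ℝ} {B : ℝ}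
    (hB : ∀ x, |F x| ≤ B) (x y : E) :
    |(F x - ∫ z, F z ∂μ) * (F y - ∫ z, F z ∂μ)| ≤ 4 * B ^ 2 := by
  rw [abs_mul]
  nlinarith [abs_sub_integral_le (μ := μ) hB x, abs_sub_integral_le (μ := μ) hB y,
    abs_nonneg (F x - ∫ z, F z ∂μ), abs_nonneg (F y - ∫ z, F z ∂μ)]

variable {μ : Measure E} {Ω : Type*} [MeasurableSpace Ω] {P : Measure Ω} {Z : ℕ → Ω → E}

theorem integral_comp_injective_tuple (hZ : ∀ i, Measurable (Z i)) (hind : iIndepFun Z P)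
    (hlaw : ∀ i, P.map (Z i) = μ) {ι : Type*} [Fintype ι] {t : ι → ℕ}
    (ht : Function.Injective t) {F : (ι → E) → ℝ} (hF : Measurable F) :
    ∫ ω, F (fun r => Z (t r) ω) ∂P = ∫ v, F v ∂(Measure.pi fun _ => μ) := by
  have hmap : P.map (fun ω r => Z (t r) ω) = Measure.pi fun _ => μ := by
    rw [(hind.precomp ht).map_fun_eq_pi_map fun r => (hZ (t r)).aemeasurable]
    simp only [hlaw]
  rw [← hmap, integral_map (measurable_pi_lambda _ fun r => hZ (t r)).aemeasurable
    hF.aestronglyMeasurable]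

theorem integral_mul_comp_tuple_eq_zero (hZ : ∀ i, Measurable (Z i)) (hind : iIndepFun Z P)
    (hlaw : ∀ i, P.map (Z i) = μ) [SigmaFinite μ] {m : ℕ} {t t' : Fin m → ℕ}
    (ht : Function.Injective (Sum.elim t t')) {G : (Fin m → E) → ℝ} (hG : Measurable G)
    (hG₀ : ∫ v, G v ∂(Measure.pi fun _ => μ) = 0) :
    ∫ ω, G (fun r => Z (t r) ω) * G (fun r => Z (t' r) ω) ∂P = 0 := by
  have hF : Measurable fun w : Fin m ⊕ Fin m → E => G (w ∘ Sum.inl) * G (w ∘ Sum.inr) :=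
    (hG.comp (measurable_pi_lambda _ fun r => measurable_pi_apply _)).mul
      (hG.comp (measurable_pi_lambda _ fun r => measurable_pi_apply _))
  refine (integral_comp_injective_tuple hZ hind hlaw ht hF).trans ?_
  rw [← (measurePreserving_sumPiEquivProdPi (fun _ => μ)).symm.integral_comp']
  exact (integral_prod_mul G G).trans (by rw [hG₀, zero_mul])

variable [IsProbabilityMeasure P] [IsProbabilityMeasure μ]

theorem integral_mul_sub_integral_le (hZ : ∀ i, Measurable (Z i)) (hind : iIndepFun Z P)
    (hlaw : ∀ i, P.map (Z i) = μ) {m n : ℕ} {F : (Fin m → E) → ℝ} (hF : Measurable F) {B : ℝ}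
    (hB : ∀ v, |F v| ≤ B) (w : Fin m ⊕ Fin m → Fin n) :
    ∫ ω, (F (fun r => Z (w (.inl r)) ω) - ∫ v, F v ∂(Measure.pi fun _ => μ))
        * (F (fun r => Z (w (.inr r)) ω) - ∫ v, F v ∂(Measure.pi fun _ => μ)) ∂P
      ≤ if Function.Injective w then 0 else 4 * B ^ 2 := by
  split_ifs with hw
  · refine (integral_mul_comp_tuple_eq_zero hZ hind hlaw ?_ (hF.sub_const _) ?_).le
    · have hw' : Sum.elim (fun r => (w (.inl r) : ℕ)) (fun r => w (.inr r)) = Fin.val ∘ w := by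
        ext (r | r) <;> rfl
      exact hw' ▸ Fin.val_injective.comp hw
    · rw [integral_sub (.of_bound hF.aestronglyMeasurable B (ae_of_all _ hB)) (integrable_const _),
        integral_const, probReal_univ, one_smul, sub_self]
  · refine (le_abs_self _).trans ?_
    rw [← Real.norm_eq_abs, ← mul_one (4 * B ^ 2), ← probReal_univ (μ := P)]
    exact norm_integral_le_of_norm_le_const (ae_of_all _ fun _ => abs_mul_sub_integral_le hB _ _)

theorem mul_integral_sq_sum_sub_integral_le (hZ : ∀ i, Measurable (Z i))
    (hind : iIndepFun Z P) (hlaw : ∀ i, P.map (Z i) = μ) {m n : ℕ} {F : (Fin m → E) → ℝ}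
    (hF : Measurable F) {B : ℝ} (hB : ∀ v, |F v| ≤ B) :
    n * ∫ ω, (∑ t : Fin m → Fin n,
        (F (fun r => Z (t r) ω) - ∫ v, F v ∂(Measure.pi fun _ => μ))) ^ 2 ∂P
      ≤ 16 * m ^ 2 * B ^ 2 * n ^ (2 * m) := by
  classical
  set θ := ∫ v, F v ∂(Measure.pi fun _ => μ)
  set X : (Fin m → Fin n) → Ω → ℝ := fun t ω => F (fun r => Z (t r) ω) - θ
  have hX : ∀ t, Measurable (X t) := fun t =>
    (hF.comp (measurable_pi_lambda _ fun r => hZ _)).sub_const θ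
  have hcount : (#{w : Fin m ⊕ Fin m → Fin n | ¬ Function.Injective w} : ℝ) * n
      ≤ (2 * m) ^ 2 * n ^ (2 * m) := by
    have := card_filter_not_injective_mul_le (ι := Fin m ⊕ Fin m) (α := Fin n)
    simp only [Fintype.card_sum, Fintype.card_fin, ← two_mul] at this
    exact_mod_cast this
  calc n * ∫ ω, (∑ t, X t ω) ^ 2 ∂P
      = n * ∑ w : Fin m ⊕ Fin m → Fin n, ∫ ω, X (w ∘ Sum.inl) ω * X (w ∘ Sum.inr) ω ∂P := by
        simp_rw [Fintype.sq_sum_pi_eq_sum_pi_sum]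
        rw [integral_finsetSum (f := fun w ω => X (w ∘ Sum.inl) ω * X (w ∘ Sum.inr) ω) _
          fun w _ => .of_bound ((hX _).mul (hX _)).aestronglyMeasurable _
            (ae_of_all _ fun ω => abs_mul_sub_integral_le hB _ _)]
    _ ≤ n * ∑ w : Fin m ⊕ Fin m → Fin n, if Function.Injective w then 0 else 4 * B ^ 2 := by
        gcongr with w
        exact integral_mul_sub_integral_le hZ hind hlaw hF hB w
    _ = #{w : Fin m ⊕ Fin m → Fin n | ¬ Function.Injective w} * n * (4 * B ^ 2) := by
        rw [sum_ite, sum_const_zero, zero_add, sum_const, nsmul_eq_mul]; ring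
    _ ≤ (2 * m) ^ 2 * n ^ (2 * m) * (4 * B ^ 2) := by gcongr
    _ = 16 * m ^ 2 * B ^ 2 * n ^ (2 * m) := by ring

theorem measure_lt_abs_vStatistic_sub_integral_le (hZ : ∀ i, Measurable (Z i))
    (hind : iIndepFun Z P) (hlaw : ∀ i, P.map (Z i) = μ) {m : ℕ} {F : (Fin m → E) → ℝ}
    (hF : Measurable F) {B : ℝ} (hB : ∀ v, |F v| ≤ B) {n : ℕ} (hn : 0 < n) {M : ℝ}
    (hM : 0 < M) :
    P {ω | M / √n < |vStatistic F n (fun i => Z i ω) - ∫ v, F v ∂(Measure.pi fun _ => μ)|}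
      ≤ ENNReal.ofReal (16 * m ^ 2 * B ^ 2 / M ^ 2) := by
  set θ := ∫ v, F v ∂(Measure.pi fun _ => μ)
  set W : Ω → ℝ := fun ω => ∑ t : Fin m → Fin n, (F (fun r => Z (t r) ω) - θ)
  have hn' : (0 : ℝ) < n := Nat.cast_pos.2 hn
  have hnm : (0 : ℝ) < n ^ m := by positivity
  have hW : ∀ ω, vStatistic F n (fun i => Z i ω) - θ = W ω / n ^ m := fun ω => by
    simp only [vStatistic, W, sum_sub_distrib, sum_const, card_univ, Fintype.card_fun,
      Fintype.card_fin, nsmul_eq_mul]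
    field_simp
    push_cast
    ring
  have hevent : {ω | M / √n < |vStatistic F n (fun i => Z i ω) - θ|}
      = {ω | M * n ^ m / √n < |W ω|} := by
    ext ω
    simp only [Set.mem_ofPred_eq, hW, abs_div, abs_of_pos hnm]
    rw [lt_div_iff₀ hnm, div_mul_eq_mul_div]
  have hWsq : Integrable (fun ω => W ω ^ 2) P := by
    refine (memLp_finsetSum (p := 2) (f := fun (t : Fin m → Fin n) ω => F (fun r => Z (t r) ω) - θ)
      univ fun t _ => MemLp.of_bound ?_ (2 * B) ?_).integrable_sq
    · exact ((hF.comp (measurable_pi_lambda _ fun r => hZ _)).sub_const θ).aestronglyMeasurable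
    · exact ae_of_all _ fun ω => abs_sub_integral_le hB _
  have hsecond := mul_integral_sq_sum_sub_integral_le hZ hind hlaw hF hB (n := n)
  rw [hevent]
  refine (measure_lt_abs_le_integral_sq_div hWsq (by positivity)).trans
    (ENNReal.ofReal_le_ofReal ?_)
  rw [div_pow, Real.sq_sqrt hn'.le, div_div_eq_mul_div, div_le_div_iff₀ (by positivity)
    (by positivity)]
  calc (∫ ω, W ω ^ 2 ∂P) * n * M ^ 2 = (n * ∫ ω, W ω ^ 2 ∂P) * M ^ 2 := by ring
    _ ≤ 16 * m ^ 2 * B ^ 2 * n ^ (2 * m) * M ^ 2 := by gcongr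
    _ = 16 * m ^ 2 * B ^ 2 * (M * n ^ m) ^ 2 := by ring

end VStatistic

theorem measurable_comp_T {𝕏 𝕐 H : Type*} [MeasurableSpace 𝕏] [MeasurableSpace 𝕐]
    [MeasurableSpace H] {ψ : 𝕐 → H} {T : 𝕏 → 𝕏 → 𝕐 → 𝕐} (hψ : Measurable ψ)
    (hT : Measurable fun q : (𝕏 × 𝕏) × 𝕐 => T q.1.1 q.1.2 q.2) :
    Measurable fun p : 𝕏 × (𝕏 × 𝕐) => ψ (T p.1 p.2.1 p.2.2) :=
  hψ.comp (hT.comp ((measurable_fst.prodMk measurable_snd.fst).prodMk measurable_snd.snd))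

section Cmmd

variable {𝕏 𝕐 H : Type*} [NormedAddCommGroup H] [InnerProductSpace ℝ H]

def cmmdKernel₂ (ψ : 𝕐 → H) (T : 𝕏 → 𝕏 → 𝕐 → 𝕐) (v : Fin 2 → 𝕏 × 𝕐) : ℝ :=
  -2 * ⟪ψ (v 0).2, ψ (T (v 0).1 (v 1).1 (v 1).2)⟫

def cmmdKernel₃ (ψ : 𝕐 → H) (T : 𝕏 → 𝕏 → 𝕐 → 𝕐) (v : Fin 3 → 𝕏 × 𝕐) : ℝ :=
  ⟪ψ (T (v 0).1 (v 1).1 (v 1).2), ψ (T (v 0).1 (v 2).1 (v 2).2)⟫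

theorem vStat_eq_vStatistic_add (ψ : 𝕐 → H) (T : 𝕏 → 𝕏 → 𝕐 → 𝕐) (n : ℕ) (z : ℕ → 𝕏 × 𝕐) :
    vStat ψ T n z = vStatistic (cmmdKernel₂ ψ T) n z + vStatistic (cmmdKernel₃ ψ T) n z := by
  simp only [vStat, vStatistic, cmmdKernel₂, cmmdKernel₃, sum_range,
    Fintype.sum_pi_fin_succ (k := 2), Fintype.sum_pi_fin_succ (k := 1), Fintype.sum_pi_fin_one,
    Fin.cons_zero, Fin.cons_one, Matrix.Fin.cons_vecCons, Matrix.cons_val_zero, Matrix.cons_val,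
    ← mul_sum]
  ring

variable {ψ : 𝕐 → H} {T : 𝕏 → 𝕏 → 𝕐 → 𝕐} {C : ℝ}

theorem abs_cmmdKernel₂_le (hψC : ∀ y, ‖ψ y‖ ≤ C) (v : Fin 2 → 𝕏 × 𝕐) :
    |cmmdKernel₂ ψ T v| ≤ 2 * C ^ 2 := by
  rw [cmmdKernel₂, abs_mul, abs_neg, abs_two]
  gcongr
  exact abs_real_inner_le_sq (hψC _) (hψC _)

theorem abs_cmmdKernel₃_le (hψC : ∀ y, ‖ψ y‖ ≤ C) (v : Fin 3 → 𝕏 × 𝕐) :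
    |cmmdKernel₃ ψ T v| ≤ C ^ 2 :=
  abs_real_inner_le_sq (hψC _) (hψC _)

variable [MeasurableSpace 𝕏] [MeasurableSpace 𝕐]

theorem norm_gEmb_le {ν : Measure 𝕏} [IsProbabilityMeasure ν] {κ : Kernel 𝕏 𝕐} [IsMarkovKernel κ]
    (hψC : ∀ y, ‖ψ y‖ ≤ C) (x : 𝕏) : ‖gEmb ν κ ψ T x‖ ≤ C :=
  calc ‖gEmb ν κ ψ T x‖ ≤ C * (ν.compProd κ).real Set.univ :=
        norm_integral_le_of_norm_le_const (ae_of_all _ fun q => hψC _)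
    _ = C := by simp

variable [MeasurableSpace H] [BorelSpace H] [SecondCountableTopology H]

theorem measurable_cmmdKernel₂ (hψ : Measurable ψ)
    (hT : Measurable fun q : (𝕏 × 𝕏) × 𝕐 => T q.1.1 q.1.2 q.2) :
    Measurable (cmmdKernel₂ ψ T) :=
  ((hψ.comp (measurable_pi_apply 0).snd).inner ((measurable_comp_T hψ hT).comp
    ((measurable_pi_apply 0).fst.prodMk (measurable_pi_apply 1)))).const_mul _

theorem measurable_cmmdKernel₃ (hψ : Measurable ψ)
    (hT : Measurable fun q : (𝕏 × 𝕏) × 𝕐 => T q.1.1 q.1.2 q.2) :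
    Measurable (cmmdKernel₃ ψ T) :=
  ((measurable_comp_T hψ hT).comp ((measurable_pi_apply 0).fst.prodMk (measurable_pi_apply 1))
    ).inner ((measurable_comp_T hψ hT).comp
      ((measurable_pi_apply 0).fst.prodMk (measurable_pi_apply 2)))

theorem stronglyMeasurable_gEmb {ν : Measure 𝕏} {κ : Kernel 𝕏 𝕐} (hψ : Measurable ψ)
    (hT : Measurable fun q : (𝕏 × 𝕏) × 𝕐 => T q.1.1 q.1.2 q.2) :
    StronglyMeasurable (gEmb ν κ ψ T) :=
  (measurable_comp_T hψ hT).stronglyMeasurable.integral_prod_right'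

variable {ν : Measure 𝕏} [IsProbabilityMeasure ν] {κ : Kernel 𝕏 𝕐} [IsMarkovKernel κ]
  [CompleteSpace H]

theorem integral_inner_comp_T (hψ : Measurable ψ)
    (hT : Measurable fun q : (𝕏 × 𝕏) × 𝕐 => T q.1.1 q.1.2 q.2) (hψC : ∀ y, ‖ψ y‖ ≤ C)
    (x : 𝕏) (h : H) :
    ∫ q, ⟪h, ψ (T x q.1 q.2)⟫ ∂(ν.compProd κ) = ⟪h, gEmb ν κ ψ T x⟫ :=
  integral_inner (.of_bound ((measurable_comp_T hψ hT).comp measurable_prodMk_left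
    |>.aestronglyMeasurable) C (ae_of_all _ fun _ => hψC _)) h

theorem integral_cmmdKernel₂ (hψ : Measurable ψ)
    (hT : Measurable fun q : (𝕏 × 𝕏) × 𝕐 => T q.1.1 q.1.2 q.2) (hψC : ∀ y, ‖ψ y‖ ≤ C) :
    ∫ v, cmmdKernel₂ ψ T v ∂(Measure.pi fun _ => ν.compProd κ)
      = ∫ q, -2 * ⟪ψ q.2, gEmb ν κ ψ T q.1⟫ ∂(ν.compProd κ) := by
  rw [integral_pi_fin_two (.of_bound (measurable_cmmdKernel₂ hψ hT).aestronglyMeasurable _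
    (ae_of_all _ (abs_cmmdKernel₂_le hψC)))]
  congr with _
  simp only [cmmdKernel₂, Matrix.cons_val_zero, Matrix.cons_val_one, integral_const_mul,
    integral_inner_comp_T hψ hT hψC]

theorem integral_cmmdKernel₃ (hψ : Measurable ψ)
    (hT : Measurable fun q : (𝕏 × 𝕏) × 𝕐 => T q.1.1 q.1.2 q.2) (hψC : ∀ y, ‖ψ y‖ ≤ C) :
    ∫ v, cmmdKernel₃ ψ T v ∂(Measure.pi fun _ => ν.compProd κ)
      = ∫ q, ‖gEmb ν κ ψ T q.1‖ ^ 2 ∂(ν.compProd κ) := by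
  rw [integral_pi_fin_three (measurable_cmmdKernel₃ hψ hT).stronglyMeasurable
    (abs_cmmdKernel₃_le hψC)]
  congr with q
  simp only [cmmdKernel₃, Matrix.cons_val_zero, Matrix.cons_val_one, Matrix.cons_val_two,
    Matrix.tail_cons, Matrix.head_cons, integral_inner_comp_T hψ hT hψC]
  simp_rw [real_inner_comm (gEmb ν κ ψ T q.1), integral_inner_comp_T hψ hT hψC,
    real_inner_self_eq_norm_sq]

theorem cmmdLoss_add_neg_integral_eq (hψ : Measurable ψ)
    (hT : Measurable fun q : (𝕏 × 𝕏) × 𝕐 => T q.1.1 q.1.2 q.2) (hψC : ∀ y, ‖ψ y‖ ≤ C) :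
    cmmdLoss ν κ ψ T + -(∫ q, ‖ψ q.2‖ ^ 2 ∂(ν.compProd κ))
      = ∫ v, cmmdKernel₂ ψ T v ∂(Measure.pi fun _ => ν.compProd κ)
        + ∫ v, cmmdKernel₃ ψ T v ∂(Measure.pi fun _ => ν.compProd κ) := by
  set g := gEmb ν κ ψ T
  have hg : Measurable g := (stronglyMeasurable_gEmb hψ hT).measurable
  have hgC : ∀ x, ‖g x‖ ≤ C := norm_gEmb_le hψC
  have hψ_sq : Integrable (fun q : 𝕏 × 𝕐 => ‖ψ q.2‖ ^ 2) (ν.compProd κ) :=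
    .of_bound ((hψ.comp measurable_snd).norm.pow_const 2).aestronglyMeasurable (C ^ 2)
      (ae_of_all _ fun q => by rw [norm_pow, norm_norm]; gcongr; exact hψC _)
  have hcross : Integrable (fun q : 𝕏 × 𝕐 => -2 * ⟪ψ q.2, g q.1⟫) (ν.compProd κ) :=
    .of_bound ((hψ.comp measurable_snd).inner (hg.comp measurable_fst) |>.const_mul _
      |>.aestronglyMeasurable) (2 * C ^ 2) (ae_of_all _ fun q => by
        rw [Real.norm_eq_abs, abs_mul, abs_neg, abs_two]
        gcongr
        exact abs_real_inner_le_sq (hψC _) (hgC _))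
  have hg_sq : Integrable (fun q : 𝕏 × 𝕐 => ‖g q.1‖ ^ 2) (ν.compProd κ) :=
    .of_bound ((hg.comp measurable_fst).norm.pow_const 2).aestronglyMeasurable (C ^ 2)
      (ae_of_all _ fun q => by rw [norm_pow, norm_norm]; gcongr; exact hgC _)
  have hexpand : cmmdLoss ν κ ψ T
      = ∫ q, ‖ψ q.2‖ ^ 2 + (-2 * ⟪ψ q.2, g q.1⟫ + ‖g q.1‖ ^ 2) ∂(ν.compProd κ) := by
    rw [cmmdLoss]
    congr with q
    rw [norm_sub_sq_real]
    ring
  rw [hexpand, integral_add hψ_sq (g := fun q => -2 * ⟪ψ q.2, g q.1⟫ + ‖g q.1‖ ^ 2)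
    (hcross.add hg_sq), integral_add hcross hg_sq,
    integral_cmmdKernel₂ hψ hT hψC, integral_cmmdKernel₃ hψ hT hψC]
  ring

theorem measure_lt_abs_vStat_sub_le (hψ : Measurable ψ)
    (hT : Measurable fun q : (𝕏 × 𝕏) × 𝕐 => T q.1.1 q.1.2 q.2) (hψC : ∀ y, ‖ψ y‖ ≤ C)
    {Ω : Type*} [MeasurableSpace Ω] {P : Measure Ω} [IsProbabilityMeasure P]
    {Z : ℕ → Ω → 𝕏 × 𝕐} (hZ : ∀ i, Measurable (Z i)) (hind : iIndepFun Z P)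
    (hlaw : ∀ i, P.map (Z i) = ν.compProd κ) {n : ℕ} (hn : 0 < n) {M : ℝ} (hM : 0 < M) :
    P {ω | M / √n <
        |vStat ψ T n (fun i => Z i ω) - (cmmdLoss ν κ ψ T + -(∫ q, ‖ψ q.2‖ ^ 2 ∂(ν.compProd κ)))|}
      ≤ ENNReal.ofReal (1600 * C ^ 4 / M ^ 2) := by
  -- Each V-statistic gets half of the deviation: `1600 = 4 * (16 * 2² * 2² + 16 * 3²)`.
  rw [cmmdLoss_add_neg_integral_eq hψ hT hψC]
  set θ₂ := ∫ v, cmmdKernel₂ ψ T v ∂(Measure.pi fun _ => ν.compProd κ)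
  set θ₃ := ∫ v, cmmdKernel₃ ψ T v ∂(Measure.pi fun _ => ν.compProd κ)
  have h₂ := measure_lt_abs_vStatistic_sub_integral_le hZ hind hlaw
    (measurable_cmmdKernel₂ hψ hT) (abs_cmmdKernel₂_le hψC) hn (half_pos hM)
  have h₃ := measure_lt_abs_vStatistic_sub_integral_le hZ hind hlaw
    (measurable_cmmdKernel₃ hψ hT) (abs_cmmdKernel₃_le hψC) hn (half_pos hM)
  have hsplit : {ω | M / √n < |vStat ψ T n (fun i => Z i ω) - (θ₂ + θ₃)|}
      ⊆ {ω | M / 2 / √n < |vStatistic (cmmdKernel₂ ψ T) n (fun i => Z i ω) - θ₂|}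
        ∪ {ω | M / 2 / √n < |vStatistic (cmmdKernel₃ ψ T) n (fun i => Z i ω) - θ₃|} := by
    intro ω hω
    by_contra hfar
    simp only [Set.mem_union, Set.mem_ofPred_eq, not_or, not_lt] at hω hfar
    rw [vStat_eq_vStatistic_add, add_sub_add_comm] at hω
    have hhalves : M / 2 / √n + M / 2 / √n = M / √n := by ring
    linarith [abs_add_le (vStatistic (cmmdKernel₂ ψ T) n (fun i => Z i ω) - θ₂)
      (vStatistic (cmmdKernel₃ ψ T) n (fun i => Z i ω) - θ₃)]
  refine (measure_mono hsplit).trans ((measure_union_le _ _).trans ((add_le_add h₂ h₃).trans_eq ?_))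
  rw [← ENNReal.ofReal_add (by positivity) (by positivity)]
  congr 1
  field_simp
  push_cast
  ring

end Cmmd

variable {𝕏 𝕐 : Type*} [MeasurableSpace 𝕏] [MeasurableSpace 𝕐]
variable {H : Type*} [NormedAddCommGroup H] [InnerProductSpace ℝ H]

theorem vStat_sqrt_n_concentration_general
    (ν : Measure 𝕏) [IsProbabilityMeasure ν]
    (κ : Kernel 𝕏 𝕐) [IsMarkovKernel κ]
    [MeasurableSpace H] [BorelSpace H] [CompleteSpace H] [SecondCountableTopology H]
    (ψ : 𝕐 → H) (hψ : Measurable ψ) (C : ℝ) (hψ_bdd : ∀ y, ‖ψ y‖ ≤ C)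
    (T : 𝕏 → 𝕏 → 𝕐 → 𝕐)
    (hT : Measurable fun q : (𝕏 × 𝕏) × 𝕐 => T q.1.1 q.1.2 q.2)
    {Ω : Type*} [MeasurableSpace Ω] (P : Measure Ω) [IsProbabilityMeasure P]
    (Z : ℕ → Ω → 𝕏 × 𝕐) (hZ_meas : ∀ i, Measurable (Z i))
    (hZ_indep : iIndepFun Z P)
    (hZ_law : ∀ i, P.map (Z i) = ν.compProd κ) :
    ∀ ε > (0 : ℝ), ∃ M > (0 : ℝ), ∀ n : ℕ, 1 ≤ n →
      P {ω | M / Real.sqrt n <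
          |vStat ψ T n (fun i => Z i ω) -
            (cmmdLoss ν κ ψ T + -(∫ z, ‖ψ z.2‖ ^ 2 ∂(ν.compProd κ)))|}
        ≤ ENNReal.ofReal ε := by
  intro ε hε
  obtain ⟨M, hM, hMε⟩ := exists_pos_div_sq_le (1600 * C ^ 4) hε
  exact ⟨M, hM, fun n hn => (measure_lt_abs_vStat_sub_le hψ hT hψ_bdd hZ_meas hZ_indep hZ_law
    hn hM).trans (ENNReal.ofReal_le_ofReal hMε)⟩

/-- **√n-concentration of the CMMD V-statistic.** For i.i.d. data with law
`μ = ν ⊗ κ` and bounded `ψ`, with `c := −∫ ‖ψ(y)‖² dμ`, for every `ε > 0` there is `M > 0`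
such that for all `n ≥ 1`,
`ℙ(|ℓ_n^V(T) − ℓ(T) − c| > M n^{−1/2}) ≤ ε`. -/
theorem vStat_sqrt_n_concentration
    [StandardBorelSpace 𝕏] [StandardBorelSpace 𝕐]
    (ν : Measure 𝕏) [IsProbabilityMeasure ν]
    (κ : Kernel 𝕏 𝕐) [IsMarkovKernel κ]
    [MeasurableSpace H] [BorelSpace H] [CompleteSpace H] [SecondCountableTopology H]
    (ψ : 𝕐 → H) (hψ : Measurable ψ) (C : ℝ) (hψ_bdd : ∀ y, ‖ψ y‖ ≤ C)
    (T : 𝕏 → 𝕏 → 𝕐 → 𝕐)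
    (hT : Measurable fun q : (𝕏 × 𝕏) × 𝕐 => T q.1.1 q.1.2 q.2)
    {Ω : Type*} [MeasurableSpace Ω] (P : Measure Ω) [IsProbabilityMeasure P]
    (Z : ℕ → Ω → 𝕏 × 𝕐) (hZ_meas : ∀ i, Measurable (Z i))
    (hZ_indep : iIndepFun Z P)
    (hZ_law : ∀ i, P.map (Z i) = ν.compProd κ) :
    ∀ ε > (0 : ℝ), ∃ M > (0 : ℝ), ∀ n : ℕ, 1 ≤ n →
      P {ω | M / Real.sqrt n <
          |vStat ψ T n (fun i => Z i ω) -
            (cmmdLoss ν κ ψ T + -(∫ z, ‖ψ z.2‖ ^ 2 ∂(ν.compProd κ)))|}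
        ≤ ENNReal.ofReal ε :=
  vStat_sqrt_n_concentration_general ν κ ψ hψ C hψ_bdd T hT P Z hZ_meas hZ_indep hZ_law
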